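/- arXiv:2509.08963 — 6 statements merged into one kernel-verified Lean document; each statement's English description precedes it below -/
import Mathlib

section
/- Let S, R be positive natural numbers, β ≥ 0, and let M be a real S×R matrix with the LRP-β column structure: for every column index k there exist vectors p, q ∈ ℝ^S with p_i ≥ 0, q_i ≥ 0 for all i, ∑_i p_i = 1, ∑_i q_i = 1, p_i·q_i = 0 for all i, and M_{ik} = (1+β)·p_i − β·q_i for all i. Then the largest singular value of M (the ℓ²→ℓ² operator norm of x ↦ M x) satisfies ‖M‖ ≤ √R·√((1+β)² + β²) ≤ √R·(1 + √2·β). -/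
open Matrix

/-- The ℓ²→ℓ² operator norm of a real `S × R` matrix `M`, i.e. the operator norm of the
linear map `x ↦ M x`; it equals the largest singular value of `M`. -/
noncomputable def l2OpNorm {S R : ℕ} (M : Matrix (Fin S) (Fin R) ℝ) : ℝ :=
  ‖LinearMap.toContinuousLinearMap (Matrix.toEuclideanLin M)‖

/-- `M` has the LRP-β column structure: every column `k` of `M` is of the form
`(1+β)·p − β·q` for nonnegative probability vectors `p, q` with disjoint supports. -/
def LRPBetaCols {S R : ℕ} (β : ℝ) (M : Matrix (Fin S) (Fin R) ℝ) : Prop :=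
  ∀ k : Fin R, ∃ p q : Fin S → ℝ,
    (∀ i, 0 ≤ p i) ∧ (∀ i, 0 ≤ q i) ∧
    (∑ i, p i) = 1 ∧ (∑ i, q i) = 1 ∧
    (∀ i, p i * q i = 0) ∧
    (∀ i, M i k = (1 + β) * p i - β * q i)

/-- Upper bound for the largest singular value of an LRP-β matrix:
`‖M‖ ≤ √R·√((1+β)² + β²) ≤ √R·(1 + √2·β)`. -/
theorem lrp_beta_singular_value_upper_bound
    (S R : ℕ) (hS : 0 < S) (hR : 0 < R) (β : ℝ) (hβ : 0 ≤ β)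
    (M : Matrix (Fin S) (Fin R) ℝ) (hM : LRPBetaCols β M) :
    l2OpNorm M ≤ Real.sqrt R * Real.sqrt ((1 + β) ^ 2 + β ^ 2) ∧
      Real.sqrt R * Real.sqrt ((1 + β) ^ 2 + β ^ 2) ≤
        Real.sqrt R * (1 + Real.sqrt 2 * β) := by
  have hC : (0:ℝ) ≤ (1 + β) ^ 2 + β ^ 2 := by positivity
  -- column bound
  have hcol : ∀ k : Fin R, ∑ i, (M i k) ^ 2 ≤ (1 + β) ^ 2 + β ^ 2 := by
    intro k
    obtain ⟨p, q, hp, hq, hps, hqs, hpq, hMk⟩ := hM k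
    have h1 : ∑ i, (M i k) ^ 2 = (1+β)^2 * ∑ i, (p i)^2 + β^2 * ∑ i, (q i)^2 := by
      rw [Finset.mul_sum, Finset.mul_sum, ← Finset.sum_add_distrib]
      refine Finset.sum_congr rfl fun i _ => ?_
      have := hpq i
      rw [hMk i]; nlinarith [hpq i]
    have h2 : ∑ i, (p i)^2 ≤ 1 := by
      calc ∑ i, (p i)^2 ≤ (∑ i, p i)^2 :=
            Finset.sum_sq_le_sq_sum_of_nonneg (fun i _ => hp i)
        _ = 1 := by rw [hps]; norm_num
    have h3 : ∑ i, (q i)^2 ≤ 1 := by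
      calc ∑ i, (q i)^2 ≤ (∑ i, q i)^2 :=
            Finset.sum_sq_le_sq_sum_of_nonneg (fun i _ => hq i)
        _ = 1 := by rw [hqs]; norm_num
    nlinarith
  constructor
  · apply ContinuousLinearMap.opNorm_le_bound _ (by positivity)
    intro v
    rw [LinearMap.coe_toContinuousLinearMap']
    have hv : (0:ℝ) ≤ ‖v‖ := norm_nonneg v
    have hnormsq : ‖(Matrix.toEuclideanLin M) v‖ ^ 2 ≤
        ((R : ℝ) * ((1 + β) ^ 2 + β ^ 2)) * ‖v‖ ^ 2 := by
      have hLHS : ‖(Matrix.toEuclideanLin M) v‖ ^ 2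
          = ∑ i, (∑ k, M i k * v k) ^ 2 := by
        rw [EuclideanSpace.norm_eq, Real.sq_sqrt (by positivity)]
        refine Finset.sum_congr rfl fun i _ => ?_
        rw [Matrix.toEuclideanLin_apply]
        simp [Matrix.mulVec, dotProduct, Real.norm_eq_abs, sq_abs]
      have hvsq : ‖v‖ ^ 2 = ∑ k, (v k) ^ 2 := by
        rw [EuclideanSpace.norm_eq, Real.sq_sqrt (by positivity)]
        exact Finset.sum_congr rfl fun k _ => by rw [Real.norm_eq_abs, sq_abs]
      rw [hLHS, hvsq]
      calc ∑ i, (∑ k, M i k * v k) ^ 2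
          ≤ ∑ i, (∑ k, (M i k)^2) * (∑ k, (v k)^2) :=
            Finset.sum_le_sum fun i _ =>
              Finset.sum_mul_sq_le_sq_mul_sq _ _ _
        _ = (∑ i, ∑ k, (M i k)^2) * (∑ k, (v k)^2) := by
            rw [← Finset.sum_mul]
        _ ≤ ((R : ℝ) * ((1 + β) ^ 2 + β ^ 2)) * (∑ k, (v k)^2) := by
            apply mul_le_mul_of_nonneg_right _ (by positivity)
            rw [Finset.sum_comm]
            calc ∑ k, ∑ i, (M i k)^2 ≤ ∑ _k : Fin R, ((1 + β) ^ 2 + β ^ 2) :=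
                  Finset.sum_le_sum fun k _ => hcol k
              _ = (R : ℝ) * ((1 + β) ^ 2 + β ^ 2) := by
                  simp [Finset.sum_const]; ring
    calc ‖(Matrix.toEuclideanLin M) v‖
        = Real.sqrt (‖(Matrix.toEuclideanLin M) v‖ ^ 2) := (Real.sqrt_sq (norm_nonneg _)).symm
      _ ≤ Real.sqrt (((R : ℝ) * ((1 + β) ^ 2 + β ^ 2)) * ‖v‖ ^ 2) :=
          Real.sqrt_le_sqrt hnormsq
      _ = Real.sqrt R * Real.sqrt ((1 + β) ^ 2 + β ^ 2) * ‖v‖ := by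
          rw [Real.sqrt_mul (by positivity), Real.sqrt_mul (by positivity),
            Real.sqrt_sq hv]
  · apply mul_le_mul_of_nonneg_left _ (Real.sqrt_nonneg _)
    rw [show (1:ℝ) + Real.sqrt 2 * β = Real.sqrt ((1 + Real.sqrt 2 * β)^2) from
      (Real.sqrt_sq (by positivity)).symm]
    apply Real.sqrt_le_sqrt
    nlinarith [Real.sq_sqrt (by norm_num : (2:ℝ) ≥ 0), Real.sqrt_nonneg 2,
      Real.sqrt_le_sqrt (by norm_num : (1:ℝ) ≤ 2), Real.sqrt_one]
end

section
/- Let β ≥ 0 and let M be a real S×R matrix with the LRP-β column structure. Let v ∈ ℝ^R be arbitrary and set w = M·v ∈ ℝ^S (so w_i = ∑_k M_{ik} v_k). Then ∑_{i : w_i > 0} w_i ≤ (1+β)·∑_{k : v_k > 0} v_k + β·∑_{k : v_k < 0} (−v_k), and ∑_{i : w_i < 0} w_i ≥ −β·∑_{k : v_k > 0} v_k − (1+β)·∑_{k : v_k < 0} (−v_k). -/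
open Matrix Finset

lemma lrp_pos_bound (S R : ℕ) (β : ℝ) (hβ : 0 ≤ β)
    (M : Matrix (Fin S) (Fin R) ℝ) (hM : LRPBetaCols β M) (v : Fin R → ℝ) :
    (∑ i ∈ univ.filter (fun i => 0 < (M *ᵥ v) i), (M *ᵥ v) i) ≤
      (1 + β) * (∑ k ∈ univ.filter (fun k => 0 < v k), v k) +
        β * (∑ k ∈ univ.filter (fun k => v k < 0), (-v k)) := by
  have hcol : ∀ k, ∑ i, max (M i k * v k) 0 ≤
      (if 0 < v k then (1+β)*v k else 0) + (if v k < 0 then β*(-v k) else 0) := by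
    intro k
    obtain ⟨p, q, hp, hq, hps, hqs, hpq, hMk⟩ := hM k
    rcases lt_trichotomy (v k) 0 with hv | hv | hv
    · rw [if_neg (not_lt.2 hv.le), if_pos hv, zero_add]
      calc ∑ i, max (M i k * v k) 0 ≤ ∑ i, (-v k) * (β * q i) := by
            apply Finset.sum_le_sum
            intro i _
            have he : M i k * v k = (-v k) * (β * q i - (1+β) * p i) := by
              rw [hMk i]; ring
            rw [he]
            apply max_le
            · have h1 : β * q i - (1+β) * p i ≤ β * q i := by nlinarith [hp i]
              exact mul_le_mul_of_nonneg_left h1 (by linarith)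
            · exact mul_nonneg (by linarith) (mul_nonneg hβ (hq i))
        _ = β * (-v k) := by
            rw [← Finset.mul_sum]
            have : ∑ i, β * q i = β := by rw [← Finset.mul_sum, hqs, mul_one]
            rw [this]; ring
    · simp [hv]
    · rw [if_pos hv, if_neg (not_lt.2 hv.le), add_zero]
      calc ∑ i, max (M i k * v k) 0 ≤ ∑ i, v k * ((1+β) * p i) := by
            apply Finset.sum_le_sum
            intro i _
            have he : M i k * v k = v k * ((1+β) * p i - β * q i) := by
              rw [hMk i]; ring
            rw [he]
            apply max_le
            · have h1 : (1+β) * p i - β * q i ≤ (1+β) * p i := by nlinarith [hq i]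
              exact mul_le_mul_of_nonneg_left h1 hv.le
            · exact mul_nonneg hv.le (mul_nonneg (by linarith) (hp i))
        _ = (1+β) * v k := by
            rw [← Finset.mul_sum]
            have : ∑ i, (1+β) * p i = 1 + β := by rw [← Finset.mul_sum, hps, mul_one]
            rw [this]; ring
  calc (∑ i ∈ univ.filter (fun i => 0 < (M *ᵥ v) i), (M *ᵥ v) i)
      = ∑ i, if 0 < (M *ᵥ v) i then (M *ᵥ v) i else 0 := by
        rw [Finset.sum_filter]
    _ ≤ ∑ i, ∑ k, max (M i k * v k) 0 := by
        apply Finset.sum_le_sum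
        intro i _
        have h0 : (M *ᵥ v) i = ∑ k, M i k * v k := rfl
        split_ifs with h
        · rw [h0]
          exact Finset.sum_le_sum (fun k _ => le_max_left _ _)
        · exact Finset.sum_nonneg (fun k _ => le_max_right _ _)
    _ = ∑ k, ∑ i, max (M i k * v k) 0 := Finset.sum_comm
    _ ≤ ∑ k, ((if 0 < v k then (1+β)*v k else 0) + (if v k < 0 then β*(-v k) else 0)) :=
        Finset.sum_le_sum (fun k _ => hcol k)
    _ = (1 + β) * (∑ k ∈ univ.filter (fun k => 0 < v k), v k) +
        β * (∑ k ∈ univ.filter (fun k => v k < 0), (-v k)) := by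
        rw [Finset.sum_add_distrib, ← Finset.sum_filter, ← Finset.sum_filter,
          Finset.mul_sum, Finset.mul_sum]

/-- One-layer propagation bound for LRP-β: for `w = M v` with `M` of LRP-β column
structure, the sum of positive components of `w` is at most
`(1+β)·∑_{v_k>0} v_k + β·∑_{v_k<0} (−v_k)`, and the sum of negative components of `w`
is at least `−β·∑_{v_k>0} v_k − (1+β)·∑_{v_k<0} (−v_k)`. -/
theorem lrp_beta_one_layer_pos_neg_bounds
    (S R : ℕ) (β : ℝ) (hβ : 0 ≤ β)
    (M : Matrix (Fin S) (Fin R) ℝ) (hM : LRPBetaCols β M)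
    (v : Fin R → ℝ) (w : Fin S → ℝ) (hw : w = M *ᵥ v) :
    (∑ i ∈ univ.filter (fun i => 0 < w i), w i) ≤
        (1 + β) * (∑ k ∈ univ.filter (fun k => 0 < v k), v k) +
          β * (∑ k ∈ univ.filter (fun k => v k < 0), (-v k)) ∧
      (∑ i ∈ univ.filter (fun i => w i < 0), w i) ≥
        -β * (∑ k ∈ univ.filter (fun k => 0 < v k), v k) -
          (1 + β) * (∑ k ∈ univ.filter (fun k => v k < 0), (-v k)) := by
  subst hw
  refine ⟨lrp_pos_bound S R β hβ M hM v, ?_⟩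
  have h2 := lrp_pos_bound S R β hβ M hM (-v)
  rw [Matrix.mulVec_neg] at h2
  have e1 : (∑ i ∈ univ.filter (fun i => 0 < (-(M *ᵥ v)) i), (-(M *ᵥ v)) i)
      = -(∑ i ∈ univ.filter (fun i => (M *ᵥ v) i < 0), (M *ᵥ v) i) := by
    rw [← Finset.sum_neg_distrib]
    apply Finset.sum_congr
    · apply Finset.filter_congr; intro i _; simp
    · intro i _; simp
  have e2 : (∑ k ∈ univ.filter (fun k => 0 < (-v) k), (-v) k)
      = ∑ k ∈ univ.filter (fun k => v k < 0), (-v k) := by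
    apply Finset.sum_congr
    · apply Finset.filter_congr; intro k _; simp
    · intro k _; simp
  have e3 : (∑ k ∈ univ.filter (fun k => (-v) k < 0), (-(-v) k))
      = ∑ k ∈ univ.filter (fun k => 0 < v k), v k := by
    apply Finset.sum_congr
    · apply Finset.filter_congr; intro k _; simp
    · intro k _; simp
  rw [e1, e2, e3] at h2
  linarith
end

section
/- Let β > 0, let t ≥ 1, let d_0, d_1, …, d_t be positive natural numbers, and for each j ∈ {1,…,t} let M_j be a real d_{j-1}×d_j matrix with the LRP-β column structure. Let q ∈ ℝ^{d_t} satisfy q_u ≥ 0 for all u and ∑_u q_u = 1, and set w = M_1 · M_2 · ⋯ · M_t · q ∈ ℝ^{d_0}. Then ∑_{i : w_i > 0} w_i ≤ 2^{t-1}·(1+β)^t and ∑_{i : w_i < 0} w_i ≥ −2^{t-1}·β·(1+β)^{t-1}. -/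
open Matrix Finset

/-- The chained matrix product `M 0 * M 1 * ⋯ * M (n-1)` of matrices
`M l : Matrix (Fin (d l)) (Fin (d (l+1))) ℝ`. -/
noncomputable def chainProd (d : ℕ → ℕ)
    (M : ∀ l : ℕ, Matrix (Fin (d l)) (Fin (d (l + 1))) ℝ) :
    ∀ n : ℕ, Matrix (Fin (d 0)) (Fin (d n)) ℝ
  | 0 => 1
  | n + 1 => chainProd d M n * M n

noncomputable def posSum {n : ℕ} (v : Fin n → ℝ) : ℝ := ∑ i, max (v i) 0
noncomputable def negSum {n : ℕ} (v : Fin n → ℝ) : ℝ := ∑ i, max (-(v i)) 0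

lemma lrp_step {S R : ℕ} {β : ℝ} (hβ : 0 ≤ β) {M : Matrix (Fin S) (Fin R) ℝ}
    (h : LRPBetaCols β M) (v : Fin R → ℝ) :
    posSum (M *ᵥ v) ≤ (1 + β) * posSum v + β * negSum v ∧
    negSum (M *ᵥ v) ≤ β * posSum v + (1 + β) * negSum v := by
  choose p q hp hq hps hqs hpq hMk using h
  have hcol : ∀ k, ∑ i, ((1 + β) * p k i * max (v k) 0 + β * q k i * max (-(v k)) 0)
      = (1 + β) * max (v k) 0 + β * max (-(v k)) 0 := by
    intro k
    rw [Finset.sum_add_distrib, ← Finset.sum_mul, ← Finset.sum_mul,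
      ← Finset.mul_sum, ← Finset.mul_sum, hps k, hqs k]
    ring
  have hcol' : ∀ k, ∑ i, ((1 + β) * p k i * max (-(v k)) 0 + β * q k i * max (v k) 0)
      = (1 + β) * max (-(v k)) 0 + β * max (v k) 0 := by
    intro k
    rw [Finset.sum_add_distrib, ← Finset.sum_mul, ← Finset.sum_mul,
      ← Finset.mul_sum, ← Finset.mul_sum, hps k, hqs k]
    ring
  constructor
  · calc posSum (M *ᵥ v)
        ≤ ∑ i, ∑ k, ((1 + β) * p k i * max (v k) 0 + β * q k i * max (-(v k)) 0) := by
          apply Finset.sum_le_sum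
          intro i _
          apply max_le
          · simp only [Matrix.mulVec, dotProduct]
            apply Finset.sum_le_sum
            intro k _
            rw [hMk k i]
            nlinarith [mul_nonneg (mul_nonneg (by linarith : (0:ℝ) ≤ 1 + β) (hp k i))
                (sub_nonneg.2 (le_max_left (v k) 0)),
              mul_nonneg (mul_nonneg hβ (hq k i))
                (by have := le_max_left (-(v k)) 0; linarith : (0:ℝ) ≤ max (-(v k)) 0 + v k)]
          · apply Finset.sum_nonneg
            intro k _
            exact add_nonneg
              (mul_nonneg (mul_nonneg (by linarith) (hp k i)) (le_max_right _ _))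
              (mul_nonneg (mul_nonneg hβ (hq k i)) (le_max_right _ _))
      _ = (1 + β) * posSum v + β * negSum v := by
          rw [Finset.sum_comm]
          simp only [hcol]
          rw [Finset.sum_add_distrib, ← Finset.mul_sum, ← Finset.mul_sum]
          rfl
  · calc negSum (M *ᵥ v)
        ≤ ∑ i, ∑ k, ((1 + β) * p k i * max (-(v k)) 0 + β * q k i * max (v k) 0) := by
          apply Finset.sum_le_sum
          intro i _
          apply max_le
          · simp only [Matrix.mulVec, dotProduct, ← Finset.sum_neg_distrib]
            apply Finset.sum_le_sum
            intro k _
            rw [hMk k i]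
            nlinarith [mul_nonneg (mul_nonneg (by linarith : (0:ℝ) ≤ 1 + β) (hp k i))
                (by have := le_max_left (-(v k)) 0; linarith : (0:ℝ) ≤ max (-(v k)) 0 + v k),
              mul_nonneg (mul_nonneg hβ (hq k i))
                (sub_nonneg.2 (le_max_left (v k) 0))]
          · apply Finset.sum_nonneg
            intro k _
            exact add_nonneg
              (mul_nonneg (mul_nonneg (by linarith) (hp k i)) (le_max_right _ _))
              (mul_nonneg (mul_nonneg hβ (hq k i)) (le_max_right _ _))
      _ = β * posSum v + (1 + β) * negSum v := by
          rw [Finset.sum_comm]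
          simp only [hcol']
          rw [Finset.sum_add_distrib, ← Finset.mul_sum, ← Finset.mul_sum]
          unfold posSum negSum
          ring

lemma chainProd_succ_left (d : ℕ → ℕ)
    (M : ∀ l : ℕ, Matrix (Fin (d l)) (Fin (d (l + 1))) ℝ) (n : ℕ) :
    chainProd d M (n + 1) =
      M 0 * chainProd (fun l => d (l + 1)) (fun l => M (l + 1)) n := by
  induction n with
  | zero => simp [chainProd]
  | succ n ih =>
    show chainProd d M (n + 1) * M (n + 1) = _
    rw [ih, Matrix.mul_assoc]
    rfl

lemma chain_bound {β : ℝ} (hβ : 0 < β) :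
    ∀ (n : ℕ) (d : ℕ → ℕ) (M : ∀ l : ℕ, Matrix (Fin (d l)) (Fin (d (l + 1))) ℝ),
      (∀ j, j < n + 1 → LRPBetaCols β (M j)) →
      ∀ q : Fin (d (n + 1)) → ℝ, (∀ u, 0 ≤ q u) → (∑ u, q u) = 1 →
      posSum (chainProd d M (n + 1) *ᵥ q) ≤ 2 ^ n * (1 + β) ^ (n + 1) ∧
      negSum (chainProd d M (n + 1) *ᵥ q) ≤ 2 ^ n * β * (1 + β) ^ n := by
  intro n
  induction n with
  | zero =>
    intro d M hM q hq hqs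
    have h1 : chainProd d M 1 = M 0 := by
      show chainProd d M 0 * M 0 = M 0
      show (1 : Matrix _ _ ℝ) * M 0 = M 0
      rw [Matrix.one_mul]
    have hPq : posSum q = 1 := by
      unfold posSum
      rw [← hqs]
      exact Finset.sum_congr rfl fun u _ => max_eq_left (hq u)
    have hNq : negSum q = 0 := by
      unfold negSum
      apply Finset.sum_eq_zero
      intro u _
      exact max_eq_right (by linarith [hq u])
    have hs := lrp_step hβ.le (hM 0 (by omega)) q
    rw [h1]
    constructor
    · calc posSum (M 0 *ᵥ q) ≤ (1 + β) * posSum q + β * negSum q := hs.1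
        _ = 2 ^ 0 * (1 + β) ^ (0 + 1) := by rw [hPq, hNq]; ring
    · calc negSum (M 0 *ᵥ q) ≤ β * posSum q + (1 + β) * negSum q := hs.2
        _ = 2 ^ 0 * β * (1 + β) ^ 0 := by rw [hPq, hNq]; ring
  | succ n ih =>
    intro d M hM q hq hqs
    have key : chainProd d M (n + 2) *ᵥ q =
        M 0 *ᵥ (chainProd (fun l => d (l + 1)) (fun l => M (l + 1)) (n + 1) *ᵥ q) := by
      rw [chainProd_succ_left d M (n + 1), ← Matrix.mulVec_mulVec]
    set v := chainProd (fun l => d (l + 1)) (fun l => M (l + 1)) (n + 1) *ᵥ q with hv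
    have hIH := ih (fun l => d (l + 1)) (fun l => M (l + 1))
      (fun j hj => hM (j + 1) (by omega)) q hq hqs
    have hs := lrp_step hβ.le (hM 0 (by omega)) v
    rw [key]
    have hpow : (0:ℝ) ≤ 2 ^ n * (1 + β) ^ n := by positivity
    constructor
    · have h1 : (1 + β) * posSum v + β * negSum v ≤
          (1 + β) * (2 ^ n * (1 + β) ^ (n + 1)) + β * (2 ^ n * β * (1 + β) ^ n) := by
        have := hIH.1; have := hIH.2; nlinarith
      have h2 : (1 + β) * (2 ^ n * (1 + β) ^ (n + 1)) + β * (2 ^ n * β * (1 + β) ^ n) ≤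
          2 ^ (n + 1) * (1 + β) ^ (n + 2) := by
        have hb2 : β ^ 2 ≤ (1 + β) ^ 2 := by nlinarith
        have e1 : (1 + β) * (2 ^ n * (1 + β) ^ (n + 1)) + β * (2 ^ n * β * (1 + β) ^ n)
            = 2 ^ n * (1 + β) ^ n * ((1 + β) ^ 2 + β ^ 2) := by ring
        have e2 : (2:ℝ) ^ (n + 1) * (1 + β) ^ (n + 2)
            = 2 ^ n * (1 + β) ^ n * (2 * (1 + β) ^ 2) := by ring
        rw [e1, e2]
        apply mul_le_mul_of_nonneg_left _ hpow
        nlinarith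
      linarith [hs.1]
    · have h1 : β * posSum v + (1 + β) * negSum v ≤
          β * (2 ^ n * (1 + β) ^ (n + 1)) + (1 + β) * (2 ^ n * β * (1 + β) ^ n) := by
        have := hIH.1; have := hIH.2; nlinarith
      have h2 : β * (2 ^ n * (1 + β) ^ (n + 1)) + (1 + β) * (2 ^ n * β * (1 + β) ^ n)
          = 2 ^ (n + 1) * β * (1 + β) ^ (n + 1) := by ring
      linarith [hs.2]

/-- Sequential bound for LRP-β: for the attribution map `w = M_1 ⋯ M_t q` propagated
through `t` LRP-β layers from simplex weights `q`, the sum of positive components is at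
most `2^{t-1}·(1+β)^t` and the sum of negative components is at least
`−2^{t-1}·β·(1+β)^{t-1}`. -/
theorem lrp_beta_sequential_bound
    (β : ℝ) (hβ : 0 < β) (t : ℕ) (ht : 1 ≤ t) (d : ℕ → ℕ)
    (hd : ∀ j, j ≤ t → 0 < d j)
    (M : ∀ l : ℕ, Matrix (Fin (d l)) (Fin (d (l + 1))) ℝ)
    (hM : ∀ j, j < t → LRPBetaCols β (M j))
    (q : Fin (d t) → ℝ) (hq : ∀ u, 0 ≤ q u) (hqs : ∑ u, q u = 1)
    (w : Fin (d 0) → ℝ) (hw : w = (chainProd d M t) *ᵥ q) :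
    (∑ i ∈ univ.filter (fun i => 0 < w i), w i) ≤ 2 ^ (t - 1) * (1 + β) ^ t ∧
      (∑ i ∈ univ.filter (fun i => w i < 0), w i) ≥
        -(2 ^ (t - 1) * β * (1 + β) ^ (t - 1)) := by
  obtain ⟨m, rfl⟩ : ∃ m, t = m + 1 := ⟨t - 1, (Nat.succ_pred_eq_of_pos ht).symm⟩
  have hcb := chain_bound hβ m d M hM q hq hqs
  rw [← hw] at hcb
  have hpos : (∑ i ∈ univ.filter (fun i => 0 < w i), w i) = posSum w := by
    rw [Finset.sum_filter]
    unfold posSum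
    apply Finset.sum_congr rfl
    intro i _
    rcases le_or_gt (w i) 0 with h | h
    · simp [not_lt.2 h, max_eq_right h]
    · simp [h, max_eq_left h.le]
  have hneg : (∑ i ∈ univ.filter (fun i => w i < 0), w i) = -negSum w := by
    rw [Finset.sum_filter]
    unfold negSum
    rw [← Finset.sum_neg_distrib]
    apply Finset.sum_congr rfl
    intro i _
    rcases lt_or_ge (w i) 0 with h | h
    · simp [h, max_eq_left (by linarith : (0:ℝ) ≤ -(w i))]
    · simp [not_lt.2 h, max_eq_right (by linarith : -(w i) ≤ 0)]
  simp only [Nat.add_sub_cancel]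
  constructor
  · rw [hpos]; exact hcb.1
  · rw [hneg]
    have := hcb.2
    linarith
end

section
/- Let γ > 1 and let q ∈ ℝ^R satisfy q_u ≥ 0 for all u and ∑_u q_u = 1. Let y : Fin R → Fin S → ℝ and assume that for every u ∈ Fin R either (i) ∑_b max(y_u(b),0) > 0 and γ^{-1/2}·∑_b max(−y_u(b),0) < ∑_b max(y_u(b),0), or (ii) y_u(b) ≤ 0 for all b and ∑_b y_u(b) < 0. Define the S×R matrix M by M_{bu} = (y_u(b) + γ·max(y_u(b),0)) / (∑_{b'} (y_u(b') + γ·max(y_u(b'),0))) and set w = M·q ∈ ℝ^S. Then ∑_{b : w_b > 0} w_b ≤ (1+γ)/(1+γ−γ^{1/2}) and ∑_{b : w_b < 0} w_b ≥ 1/(1−γ^{1/2}) = −1/(γ^{1/2}−1). -/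
open Matrix Finset

/-- One-layer LRP-γ bound with simplex initialization: for the LRP-γ attribution matrix
`M` built from weighted contributions `y` whose columns each satisfy the γ-condition (i)
or are entirely nonpositive with negative sum (ii), and simplex weights `q`, the vector
`w = M q` satisfies `∑_{w_b>0} w_b ≤ (1+γ)/(1+γ−√γ)` and
`∑_{w_b<0} w_b ≥ 1/(1−√γ) = −1/(√γ−1)`. -/
theorem lrp_gamma_one_layer_simplex_bound
    (S R : ℕ) (γ : ℝ) (hγ : 1 < γ)
    (q : Fin R → ℝ) (hq : ∀ u, 0 ≤ q u) (hqs : ∑ u, q u = 1)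
    (y : Fin R → Fin S → ℝ)
    (hy : ∀ u : Fin R,
      ((0 < ∑ b, max (y u b) 0) ∧
        (Real.sqrt γ)⁻¹ * ∑ b, max (-(y u b)) 0 < ∑ b, max (y u b) 0) ∨
      ((∀ b, y u b ≤ 0) ∧ (∑ b, y u b) < 0))
    (M : Matrix (Fin S) (Fin R) ℝ)
    (hMdef : ∀ b u, M b u =
      (y u b + γ * max (y u b) 0) / ∑ b', (y u b' + γ * max (y u b') 0))
    (w : Fin S → ℝ) (hw : w = M *ᵥ q) :
    (∑ b ∈ univ.filter (fun b => 0 < w b), w b) ≤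
        (1 + γ) / (1 + γ - Real.sqrt γ) ∧
      (∑ b ∈ univ.filter (fun b => w b < 0), w b) ≥ 1 / (1 - Real.sqrt γ) ∧
      1 / (1 - Real.sqrt γ) = -(1 / (Real.sqrt γ - 1)) := by
  have hγ0 : (0:ℝ) < γ := by linarith
  set s := Real.sqrt γ with hsdef
  have hs2 : s ^ 2 = γ := Real.sq_sqrt hγ0.le
  have hs0 : 0 ≤ s := Real.sqrt_nonneg γ
  have hs1 : 1 < s := by nlinarith
  have hden : 0 < 1 + γ - s := by nlinarith
  -- column bounds
  have key : ∀ u, (∑ b, max (M b u) 0 ≤ (1+γ)/(1+γ-s)) ∧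
      (∑ b, max (-(M b u)) 0 ≤ s/(1+γ-s)) := by
    intro u
    set P := ∑ b, max (y u b) 0 with hP
    set N := ∑ b, max (-(y u b)) 0 with hN
    have hPnn : 0 ≤ P := Finset.sum_nonneg fun b _ => le_max_right _ _
    have hNnn : 0 ≤ N := Finset.sum_nonneg fun b _ => le_max_right _ _
    set D := ∑ b', (y u b' + γ * max (y u b') 0) with hD
    have hnum : ∀ b, y u b + γ * max (y u b) 0
        = (1+γ) * max (y u b) 0 - max (-(y u b)) 0 := by
      intro b
      have h := max_zero_sub_max_neg_zero_eq_self (y u b)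
      nlinarith [h]
    have hDform : D = (1+γ)*P - N := by
      rw [hD, hP, hN, Finset.mul_sum, ← Finset.sum_sub_distrib]
      exact Finset.sum_congr rfl fun b _ => hnum b
    rcases hy u with ⟨hPpos, hcond⟩ | ⟨hyle, hysum⟩
    · -- case (i)
      have hNsP : N < s * P := by
        have h2 := mul_lt_mul_of_pos_left hcond (by linarith : (0:ℝ) < s)
        rwa [← mul_assoc, mul_inv_cancel₀ (by linarith), one_mul] at h2
      have hDpos : 0 < D := by rw [hDform]; nlinarith
      have hMform : ∀ b, max (M b u) 0 = max (y u b + γ * max (y u b) 0) 0 / D := by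
        intro b
        rw [hMdef b u, ← hD, ← max_div_div_right hDpos.le, zero_div]
      have hMnegform : ∀ b, max (-(M b u)) 0 = max (-(y u b + γ * max (y u b) 0)) 0 / D := by
        intro b
        rw [hMdef b u, ← hD, ← neg_div, ← max_div_div_right hDpos.le, zero_div]
      constructor
      · have h1 : ∑ b, max (M b u) 0 ≤ (1+γ)*P / D := by
          rw [hP, Finset.mul_sum, Finset.sum_div]
          refine Finset.sum_le_sum fun b _ => ?_
          rw [hMform b]
          refine (div_le_div_iff_of_pos_right hDpos).mpr (max_le ?_ ?_)
          · rw [hnum b]; nlinarith [le_max_right (-(y u b)) (0:ℝ)]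
          · nlinarith [le_max_right (y u b) (0:ℝ)]
        refine h1.trans ?_
        rw [div_le_div_iff₀ hDpos hden, hDform]
        nlinarith
      · have h1 : ∑ b, max (-(M b u)) 0 ≤ N / D := by
          rw [hN, Finset.sum_div]
          refine Finset.sum_le_sum fun b _ => ?_
          rw [hMnegform b]
          refine (div_le_div_iff_of_pos_right hDpos).mpr (max_le ?_ ?_)
          · rw [hnum b]; nlinarith [le_max_right (y u b) (0:ℝ)]
          · exact le_max_right _ _
        refine h1.trans ?_
        rw [div_le_div_iff₀ hDpos hden, hDform]
        nlinarith
    · -- case (ii)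
      have hmax0 : ∀ b, max (y u b) 0 = 0 := fun b => max_eq_right (hyle b)
      have hDeq : D = ∑ b, y u b := by
        rw [hD]
        exact Finset.sum_congr rfl fun b _ => by rw [hmax0 b, mul_zero, add_zero]
      have hDneg : D < 0 := hDeq ▸ hysum
      have hMnn : ∀ b, 0 ≤ M b u := by
        intro b
        rw [hMdef b u, ← hD, hmax0 b, mul_zero, add_zero]
        have h := div_nonneg (neg_nonneg.mpr (hyle b)) (neg_nonneg.mpr hDneg.le)
        rwa [neg_div_neg_eq] at h
      constructor
      · have h1 : ∑ b, max (M b u) 0 = 1 := by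
          have : ∑ b, max (M b u) 0 = ∑ b, M b u :=
            Finset.sum_congr rfl fun b _ => max_eq_left (hMnn b)
          rw [this]
          have h4 : ∑ b, M b u
              = (∑ b, (y u b + γ * max (y u b) 0)) / ∑ b', (y u b' + γ * max (y u b') 0) := by
            rw [Finset.sum_div]
            exact Finset.sum_congr rfl fun b _ => hMdef b u
          rw [h4, div_self (by rw [← hD]; exact hDneg.ne)]
        rw [h1, le_div_iff₀ hden]
        nlinarith
      · have h1 : ∑ b, max (-(M b u)) 0 = 0 := by
          refine Finset.sum_eq_zero fun b _ => max_eq_right (by linarith [hMnn b])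
        rw [h1]
        positivity
  -- global part
  have hwb : ∀ b, w b = ∑ u, M b u * q u := by
    intro b; rw [hw]; rfl
  have hposbound : ∑ b, max (w b) 0 ≤ (1+γ)/(1+γ-s) := by
    have h1 : ∀ b, max (w b) 0 ≤ ∑ u, max (M b u) 0 * q u := by
      intro b
      apply max_le
      · rw [hwb b]
        refine Finset.sum_le_sum fun u _ => ?_
        exact mul_le_mul_of_nonneg_right (le_max_left _ _) (hq u)
      · exact Finset.sum_nonneg fun u _ => mul_nonneg (le_max_right _ _) (hq u)
    calc ∑ b, max (w b) 0 ≤ ∑ b, ∑ u, max (M b u) 0 * q u := Finset.sum_le_sum fun b _ => h1 b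
      _ = ∑ u, (∑ b, max (M b u) 0) * q u := by
          rw [Finset.sum_comm]
          exact Finset.sum_congr rfl fun u _ => (Finset.sum_mul _ _ _).symm
      _ ≤ ∑ u, ((1+γ)/(1+γ-s)) * q u :=
          Finset.sum_le_sum fun u _ => mul_le_mul_of_nonneg_right (key u).1 (hq u)
      _ = (1+γ)/(1+γ-s) := by rw [← Finset.mul_sum, hqs, mul_one]
  have hnegbound : ∑ b, max (-(w b)) 0 ≤ s/(1+γ-s) := by
    have h1 : ∀ b, max (-(w b)) 0 ≤ ∑ u, max (-(M b u)) 0 * q u := by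
      intro b
      apply max_le
      · rw [hwb b, ← Finset.sum_neg_distrib]
        refine Finset.sum_le_sum fun u _ => ?_
        rw [neg_mul_eq_neg_mul]
        exact mul_le_mul_of_nonneg_right (le_max_left _ _) (hq u)
      · exact Finset.sum_nonneg fun u _ => mul_nonneg (le_max_right _ _) (hq u)
    calc ∑ b, max (-(w b)) 0 ≤ ∑ b, ∑ u, max (-(M b u)) 0 * q u := Finset.sum_le_sum fun b _ => h1 b
      _ = ∑ u, (∑ b, max (-(M b u)) 0) * q u := by
          rw [Finset.sum_comm]
          exact Finset.sum_congr rfl fun u _ => (Finset.sum_mul _ _ _).symm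
      _ ≤ ∑ u, (s/(1+γ-s)) * q u :=
          Finset.sum_le_sum fun u _ => mul_le_mul_of_nonneg_right (key u).2 (hq u)
      _ = s/(1+γ-s) := by rw [← Finset.mul_sum, hqs, mul_one]
  refine ⟨?_, ?_, ?_⟩
  · calc ∑ b ∈ univ.filter (fun b => 0 < w b), w b
        ≤ ∑ b ∈ univ.filter (fun b => 0 < w b), max (w b) 0 :=
          Finset.sum_le_sum fun b _ => le_max_left _ _
      _ ≤ ∑ b, max (w b) 0 :=
          Finset.sum_le_sum_of_subset_of_nonneg (Finset.filter_subset _ _)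
            (fun b _ _ => le_max_right _ _)
      _ ≤ (1+γ)/(1+γ-s) := hposbound
  · have h2 : ∑ b ∈ univ.filter (fun b => w b < 0), (-(w b)) ≤ ∑ b, max (-(w b)) 0 := by
      calc ∑ b ∈ univ.filter (fun b => w b < 0), (-(w b))
          ≤ ∑ b ∈ univ.filter (fun b => w b < 0), max (-(w b)) 0 :=
            Finset.sum_le_sum fun b _ => le_max_left _ _
        _ ≤ ∑ b, max (-(w b)) 0 :=
            Finset.sum_le_sum_of_subset_of_nonneg (Finset.filter_subset _ _)
              (fun b _ _ => le_max_right _ _)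
    rw [Finset.sum_neg_distrib] at h2
    have h3 : s/(1+γ-s) ≤ -(1/(1-s)) := by
      have h1s : 0 < s - 1 := by linarith
      have : -(1/(1-s)) = 1/(s-1) := by
        rw [show (1:ℝ) - s = -(s-1) by ring, div_neg, neg_neg]
      rw [this, div_le_div_iff₀ hden h1s]
      nlinarith
    linarith [hnegbound]
  · rw [show (1:ℝ) - s = -(s-1) by ring, div_neg]
end

section
/- Let γ > 1 and let y : Fin R → Fin S → ℝ be such that for every u ∈ Fin R one has ∑_b max(y_u(b),0) > 0 and γ^{-1/2}·∑_b max(−y_u(b),0) < ∑_b max(y_u(b),0). Define the S×R matrix M by M_{bu} = (y_u(b) + γ·max(y_u(b),0)) / (∑_{b'} (y_u(b') + γ·max(y_u(b'),0))). Let v ∈ ℝ^R be arbitrary and set w = M·v ∈ ℝ^S. Then, with c₊ = (1+γ)/(1+γ−γ^{1/2}) and c₋ = γ^{1/2}/(1+γ−γ^{1/2}), one has ∑_{b : w_b > 0} w_b ≤ c₊·∑_{u : v_u > 0} v_u + c₋·∑_{u : v_u < 0} (−v_u), and ∑_{b : w_b < 0} w_b ≥ −c₋·∑_{u : v_u > 0}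 v_u − c₊·∑_{u : v_u < 0} (−v_u). -/
open Matrix Finset

private lemma lrp_max_div_zero {a D : ℝ} (hD : 0 < D) : max (a / D) 0 = max a 0 / D := by
  rcases le_total a 0 with h | h
  · rw [max_eq_right h, zero_div]
    exact max_eq_right (div_nonpos_iff.mpr (Or.inr ⟨h, hD.le⟩))
  · rw [max_eq_left h]
    exact max_eq_left (div_nonneg h hD.le)

private lemma lrp_max_mul_zero (a c : ℝ) (hc : 0 ≤ c) : max (a * c) 0 = max a 0 * c := by
  rcases le_total a 0 with h | h
  · rw [max_eq_right h, zero_mul]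
    exact max_eq_right (by nlinarith : a * c ≤ 0)
  · rw [max_eq_left h]
    exact max_eq_left (mul_nonneg h hc)

/-- One-layer LRP-γ propagation bound for arbitrary upstream scores: for the LRP-γ
attribution matrix `M` built from contributions `y`, all of whose columns satisfy the
γ-condition, and any `v`, the vector `w = M v` satisfies, with
`c₊ = (1+γ)/(1+γ−√γ)` and `c₋ = √γ/(1+γ−√γ)`:
`∑_{w_b>0} w_b ≤ c₊·∑_{v_u>0} v_u + c₋·∑_{v_u<0} (−v_u)` and
`∑_{w_b<0} w_b ≥ −c₋·∑_{v_u>0} v_u − c₊·∑_{v_u<0} (−v_u)`. -/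
theorem lrp_gamma_one_layer_pos_neg_bounds
    (S R : ℕ) (γ : ℝ) (hγ : 1 < γ)
    (y : Fin R → Fin S → ℝ)
    (hy : ∀ u : Fin R, (0 < ∑ b, max (y u b) 0) ∧
      (Real.sqrt γ)⁻¹ * ∑ b, max (-(y u b)) 0 < ∑ b, max (y u b) 0)
    (M : Matrix (Fin S) (Fin R) ℝ)
    (hMdef : ∀ b u, M b u =
      (y u b + γ * max (y u b) 0) / ∑ b', (y u b' + γ * max (y u b') 0))
    (v : Fin R → ℝ) (w : Fin S → ℝ) (hw : w = M *ᵥ v)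
    (cpos cneg : ℝ)
    (hcpos : cpos = (1 + γ) / (1 + γ - Real.sqrt γ))
    (hcneg : cneg = Real.sqrt γ / (1 + γ - Real.sqrt γ)) :
    (∑ b ∈ univ.filter (fun b => 0 < w b), w b) ≤
        cpos * (∑ u ∈ univ.filter (fun u => 0 < v u), v u) +
          cneg * (∑ u ∈ univ.filter (fun u => v u < 0), (-v u)) ∧
      (∑ b ∈ univ.filter (fun b => w b < 0), w b) ≥
        -cneg * (∑ u ∈ univ.filter (fun u => 0 < v u), v u) -
          cpos * (∑ u ∈ univ.filter (fun u => v u < 0), (-v u)) := by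
  have hγ0 : (0:ℝ) < γ := by linarith
  set s := Real.sqrt γ with hs
  have hss : s * s = γ := Real.mul_self_sqrt hγ0.le
  have hsnn : (0:ℝ) ≤ s := Real.sqrt_nonneg γ
  have hs1 : 1 < s := by nlinarith
  have hden : 0 < 1 + γ - s := by nlinarith
  -- per-column bounds
  have key : ∀ u : Fin R, (∑ b, max (M b u) 0) ≤ cpos ∧ (∑ b, max (-(M b u)) 0) ≤ cneg := by
    intro u
    obtain ⟨hP, hN⟩ := hy u
    set P := ∑ b, max (y u b) 0 with hPdef
    set N := ∑ b, max (-(y u b)) 0 with hNdef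
    have hs0 : (0:ℝ) < s := by linarith
    have hNP : N < s * P := by
      have h := mul_lt_mul_of_pos_left hN hs0
      rwa [← mul_assoc, mul_inv_cancel₀ hs0.ne', one_mul] at h
    have hN0 : 0 ≤ N := Finset.sum_nonneg fun b _ => le_max_right _ _
    have hDval : (∑ b', (y u b' + γ * max (y u b') 0)) = (1+γ)*P - N := by
      have hpt : ∀ b, y u b + γ * max (y u b) 0
          = (1+γ) * max (y u b) 0 - max (-(y u b)) 0 := by
        intro b
        rcases le_total (y u b) 0 with h | h
        · rw [max_eq_right h, max_eq_left (neg_nonneg.mpr h)]; ring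
        · rw [max_eq_left h, max_eq_right (neg_nonpos.mpr h)]; ring
      rw [Finset.sum_congr rfl fun b _ => hpt b, Finset.sum_sub_distrib, ← Finset.mul_sum]
    have hDpos : 0 < ∑ b', (y u b' + γ * max (y u b') 0) := by
      rw [hDval]; nlinarith [mul_pos hden hP]
    set D := ∑ b', (y u b' + γ * max (y u b') 0) with hDdef
    have hMpos : ∀ b, max (M b u) 0 = (1+γ) * max (y u b) 0 / D := by
      intro b
      rw [hMdef b u, ← hDdef, lrp_max_div_zero hDpos]
      congr 1
      rcases le_total (y u b) 0 with h | h
      · simp [max_eq_right h]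
      · rw [max_eq_left h, max_eq_left (by nlinarith : (0:ℝ) ≤ y u b + γ * y u b)]; ring
    have hMneg : ∀ b, max (-(M b u)) 0 = max (-(y u b)) 0 / D := by
      intro b
      rw [hMdef b u, ← hDdef, ← neg_div, lrp_max_div_zero hDpos]
      congr 1
      rcases le_total (y u b) 0 with h | h
      · rw [max_eq_right h, mul_zero, add_zero]
      · rw [max_eq_left h, max_eq_right (neg_nonpos.mpr h),
          max_eq_right (by nlinarith : -(y u b + γ * y u b) ≤ 0)]
    have hmul : (1+γ) * N ≤ (1+γ) * (s * P) :=
      mul_le_mul_of_nonneg_left hNP.le (by linarith)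
    constructor
    · rw [Finset.sum_congr rfl fun b _ => hMpos b, ← Finset.sum_div, ← Finset.mul_sum,
        ← hPdef, hcpos, div_le_div_iff₀ hDpos hden, hDval]
      nlinarith
    · rw [Finset.sum_congr rfl fun b _ => hMneg b, ← Finset.sum_div, ← hNdef,
        hcneg, div_le_div_iff₀ hDpos hden, hDval]
      nlinarith
  have hwb : ∀ b, w b = ∑ u, M b u * v u := by
    intro b; rw [hw]; simp [Matrix.mulVec, dotProduct]
  -- rewriting the filtered sums
  have hposW : (∑ b ∈ univ.filter (fun b => 0 < w b), w b) = ∑ b, max (w b) 0 := by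
    rw [Finset.sum_filter]
    refine Finset.sum_congr rfl fun b _ => ?_
    split_ifs with h
    · exact (max_eq_left h.le).symm
    · exact (max_eq_right (not_lt.mp h)).symm
  have hnegW : (∑ b ∈ univ.filter (fun b => w b < 0), w b) = -(∑ b, max (-(w b)) 0) := by
    rw [Finset.sum_filter, ← Finset.sum_neg_distrib]
    refine Finset.sum_congr rfl fun b _ => ?_
    split_ifs with h
    · rw [max_eq_left (by linarith : (0:ℝ) ≤ -(w b))]; ring
    · rw [max_eq_right (by simpa using not_lt.mp h)]; ring
  -- the if-splitting identity
  have hFsum : ∀ (c1 c2 : ℝ),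
      (∑ u, (if 0 < v u then c1 * v u else if v u < 0 then c2 * (-v u) else 0))
      = c1 * (∑ u ∈ univ.filter (fun u => 0 < v u), v u)
        + c2 * (∑ u ∈ univ.filter (fun u => v u < 0), (-v u)) := by
    intro c1 c2
    rw [Finset.mul_sum, Finset.mul_sum, Finset.sum_filter, Finset.sum_filter,
      ← Finset.sum_add_distrib]
    refine Finset.sum_congr rfl fun u _ => ?_
    split_ifs with h1 h2 <;> first | linarith | ring
  -- positive-part bound
  have step_pos : ∑ b, max (w b) 0
      ≤ ∑ u, (if 0 < v u then cpos * v u else if v u < 0 then cneg * (-v u) else 0) := by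
    calc ∑ b, max (w b) 0 ≤ ∑ b, ∑ u, max (M b u * v u) 0 := by
          refine Finset.sum_le_sum fun b _ => ?_
          rw [hwb b]
          exact max_le (Finset.sum_le_sum fun u _ => le_max_left _ _)
            (Finset.sum_nonneg fun u _ => le_max_right _ _)
      _ = ∑ u, ∑ b, max (M b u * v u) 0 := Finset.sum_comm
      _ ≤ _ := by
          refine Finset.sum_le_sum fun u _ => ?_
          rcases lt_trichotomy (v u) 0 with h | h | h
          · rw [if_neg (by linarith), if_pos h]
            have hpt : ∀ b, max (M b u * v u) 0 = max (-(M b u)) 0 * (-v u) := fun b => by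
              rw [show M b u * v u = (-(M b u)) * (-v u) by ring]
              exact lrp_max_mul_zero _ _ (by linarith)
            rw [Finset.sum_congr rfl fun b _ => hpt b, ← Finset.sum_mul]
            exact mul_le_mul_of_nonneg_right (key u).2 (by linarith)
          · simp [h]
          · rw [if_pos h]
            have hpt : ∀ b, max (M b u * v u) 0 = max (M b u) 0 * v u := fun b =>
              lrp_max_mul_zero _ _ h.le
            rw [Finset.sum_congr rfl fun b _ => hpt b, ← Finset.sum_mul]
            exact mul_le_mul_of_nonneg_right (key u).1 h.le
  -- negative-part bound
  have step_neg : ∑ b, max (-(w b)) 0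
      ≤ ∑ u, (if 0 < v u then cneg * v u else if v u < 0 then cpos * (-v u) else 0) := by
    calc ∑ b, max (-(w b)) 0 ≤ ∑ b, ∑ u, max (-(M b u * v u)) 0 := by
          refine Finset.sum_le_sum fun b _ => ?_
          rw [hwb b, ← Finset.sum_neg_distrib]
          exact max_le (Finset.sum_le_sum fun u _ => le_max_left _ _)
            (Finset.sum_nonneg fun u _ => le_max_right _ _)
      _ = ∑ u, ∑ b, max (-(M b u * v u)) 0 := Finset.sum_comm
      _ ≤ _ := by
          refine Finset.sum_le_sum fun u _ => ?_
          rcases lt_trichotomy (v u) 0 with h | h | h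
          · rw [if_neg (by linarith), if_pos h]
            have hpt : ∀ b, max (-(M b u * v u)) 0 = max (M b u) 0 * (-v u) := fun b => by
              rw [show -(M b u * v u) = M b u * (-v u) by ring]
              exact lrp_max_mul_zero _ _ (by linarith)
            rw [Finset.sum_congr rfl fun b _ => hpt b, ← Finset.sum_mul]
            exact mul_le_mul_of_nonneg_right (key u).1 (by linarith)
          · simp [h]
          · rw [if_pos h]
            have hpt : ∀ b, max (-(M b u * v u)) 0 = max (-(M b u)) 0 * v u := fun b => by
              rw [show -(M b u * v u) = (-(M b u)) * v u by ring]
              exact lrp_max_mul_zero _ _ h.le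
            rw [Finset.sum_congr rfl fun b _ => hpt b, ← Finset.sum_mul]
            exact mul_le_mul_of_nonneg_right (key u).2 h.le
  constructor
  · rw [hposW]
    exact step_pos.trans (le_of_eq (hFsum cpos cneg))
  · rw [ge_iff_le, hnegW]
    have h2 := step_neg.trans (le_of_eq (hFsum cneg cpos))
    linarith
end

section
/- Let γ > 1, let t ≥ 1, let d_0, d_1, …, d_t be positive natural numbers, and for each j ∈ {1,…,t} let M_j be a real d_{j-1}×d_j LRP-γ attribution matrix built from activations y^{(j)} : Fin d_j → Fin d_{j-1} → ℝ via (M_j)_{bu} = (y^{(j)}_u(b) + γ·max(y^{(j)}_u(b),0)) / (∑_{b'} (y^{(j)}_u(b') + γ·max(y^{(j)}_u(b'),0))), where every column u of every layer j satisfies ∑_b max(y^{(j)}_u(b),0) > 0 and γ^{-1/2}·∑_b max(−y^{(j)}_u(b),0) < ∑_b max(y^{(j)}_u(b),0). Let q ∈ ℝ^{d_t} satisfy q_u ≥ 0 for all u and ∑_u q_u = 1, and set w = M_1 · M_2 · ⋯ · M_t · q ∈ ℝ^{d_0}. Then, with b(γ) = max( 1/(γ^{1/2}−1), (1+γ)/(1+γ−γ^{1/2})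 ), one has ∑_{i : w_i > 0} w_i ≤ 2^{t-1}·((1+γ)/(1+γ−γ^{1/2}))·b(γ)^{t-1} and ∑_{i : w_i < 0} w_i ≥ −2^{t-1}·(1/(γ^{1/2}−1))·b(γ)^{t-1}. -/
/-!
Write `P(v) = ∑ vᵢ⁺` and `N(v) = ∑ vᵢ⁻`. Under the γ-condition every column of an
LRP-γ matrix has positive mass at most `α = (1+γ)/(1+γ-√γ)` and negative mass at most
`β = √γ/(1+γ-√γ)`, so one layer sends `(P, N)` to at most `(αP + βN, βP + αN)`.
As `β ≤ α ≤ b(γ)`, the functional `αP + βN` grows by a factor at most `2b(γ)` per layer,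
whence `P(M₁⋯Mₜ v) ≤ (2b(γ))^(t-1) (αP(v) + βN(v))`. Apply this to `v = q` and `v = -q`,
and use `β ≤ 1/(√γ-1)`.
-/

open Matrix Finset

section Mass

variable {ι κ : Type*} [Fintype ι] [Fintype κ]

def posMass (v : ι → ℝ) : ℝ := ∑ i, max (v i) 0

def negMass (v : ι → ℝ) : ℝ := ∑ i, max (-v i) 0

lemma posMass_nonneg (v : ι → ℝ) : 0 ≤ posMass v :=
  sum_nonneg fun _ _ => le_max_right _ _

lemma negMass_nonneg (v : ι → ℝ) : 0 ≤ negMass v :=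
  sum_nonneg fun _ _ => le_max_right _ _

lemma posMass_neg (v : ι → ℝ) : posMass (-v) = negMass v := rfl

lemma negMass_neg (v : ι → ℝ) : negMass (-v) = posMass v := by
  simp only [negMass, posMass, Pi.neg_apply, neg_neg]

lemma posMass_of_nonneg {v : ι → ℝ} (hv : ∀ i, 0 ≤ v i) : posMass v = ∑ i, v i :=
  sum_congr rfl fun i _ => max_eq_left (hv i)

lemma negMass_of_nonneg {v : ι → ℝ} (hv : ∀ i, 0 ≤ v i) : negMass v = 0 :=
  sum_eq_zero fun i _ => max_eq_right (neg_nonpos.2 (hv i))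

lemma sum_filter_pos_eq_posMass (v : ι → ℝ) :
    ∑ i ∈ univ.filter (fun i => 0 < v i), v i = posMass v := by
  rw [sum_filter]
  refine sum_congr rfl fun i _ => ?_
  split_ifs with h
  · exact (max_eq_left h.le).symm
  · exact (max_eq_right (not_lt.1 h)).symm

lemma sum_filter_neg_eq_neg_negMass (v : ι → ℝ) :
    ∑ i ∈ univ.filter (fun i => v i < 0), v i = -negMass v := by
  rw [← posMass_neg, ← sum_filter_pos_eq_posMass, ← sum_neg_distrib]
  simp only [Pi.neg_apply, neg_pos, neg_neg]

lemma posMass_div_const (v : ι → ℝ) {c : ℝ} (hc : 0 ≤ c) :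
    posMass (fun i => v i / c) = posMass v / c := by
  simp only [posMass, sum_div]
  exact sum_congr rfl fun i _ => by rw [← max_div_div_right hc, zero_div]

lemma negMass_div_const (v : ι → ℝ) {c : ℝ} (hc : 0 ≤ c) :
    negMass (fun i => v i / c) = negMass v / c := by
  simp only [negMass, sum_div, ← neg_div]
  exact sum_congr rfl fun i _ => by rw [← max_div_div_right hc, zero_div]

lemma max_mul_zero (a b : ℝ) :
    max (a * b) 0 = max a 0 * max b 0 + max (-a) 0 * max (-b) 0 := by
  simp only [max_def]
  split_ifs <;> nlinarith

lemma posMass_mulVec_le (A : Matrix ι κ ℝ) {α β : ℝ} (hα : ∀ u, posMass (Aᵀ u) ≤ α)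
    (hβ : ∀ u, negMass (Aᵀ u) ≤ β) (v : κ → ℝ) :
    posMass (A *ᵥ v) ≤ α * posMass v + β * negMass v := by
  have entry_le : ∀ i, max ((A *ᵥ v) i) 0 ≤ ∑ u, max (A i u * v u) 0 := fun i =>
    max_le (sum_le_sum fun u _ => le_max_left _ _) (sum_nonneg fun u _ => le_max_right _ _)
  calc posMass (A *ᵥ v)
      ≤ ∑ i, ∑ u, max (A i u * v u) 0 := sum_le_sum fun i _ => entry_le i
    _ = ∑ u, (posMass (Aᵀ u) * max (v u) 0 + negMass (Aᵀ u) * max (-v u) 0) := by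
        rw [sum_comm]
        simp only [max_mul_zero, sum_add_distrib, ← sum_mul, posMass, negMass, transpose_apply]
    _ ≤ ∑ u, (α * max (v u) 0 + β * max (-v u) 0) :=
        sum_le_sum fun u _ => add_le_add
          (mul_le_mul_of_nonneg_right (hα u) (le_max_right _ _))
          (mul_le_mul_of_nonneg_right (hβ u) (le_max_right _ _))
    _ = α * posMass v + β * negMass v := by
        rw [sum_add_distrib, posMass, negMass, mul_sum, mul_sum]

lemma negMass_mulVec_le (A : Matrix ι κ ℝ) {α β : ℝ} (hα : ∀ u, posMass (Aᵀ u) ≤ α)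
    (hβ : ∀ u, negMass (Aᵀ u) ≤ β) (v : κ → ℝ) :
    negMass (A *ᵥ v) ≤ β * posMass v + α * negMass v := by
  have h := posMass_mulVec_le A hα hβ (-v)
  rw [mulVec_neg, posMass_neg, posMass_neg, negMass_neg] at h
  linarith

end Mass

section LRP

variable {ι : Type*} [Fintype ι]

noncomputable def lrpColumn (γ : ℝ) (x : ι → ℝ) : ι → ℝ :=
  fun b => (x b + γ * max (x b) 0) / ∑ b', (x b' + γ * max (x b') 0)

lemma lrp_numerator_eq (γ a : ℝ) : a + γ * max a 0 = (1 + γ) * max a 0 - max (-a) 0 := by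
  simp only [max_def]
  split_ifs <;> nlinarith

lemma lrp_denominator_eq (γ : ℝ) (x : ι → ℝ) :
    ∑ b, (x b + γ * max (x b) 0) = (1 + γ) * posMass x - negMass x := by
  simp only [lrp_numerator_eq, sum_sub_distrib, posMass, negMass, mul_sum]

lemma posMass_lrp_numerator {γ : ℝ} (hγ : 0 ≤ γ) (x : ι → ℝ) :
    posMass (fun b => x b + γ * max (x b) 0) = (1 + γ) * posMass x := by
  simp only [posMass, mul_sum]
  exact sum_congr rfl fun b _ => by simp only [max_def]; split_ifs <;> nlinarith

lemma negMass_lrp_numerator {γ : ℝ} (hγ : 0 ≤ γ) (x : ι → ℝ) :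
    negMass (fun b => x b + γ * max (x b) 0) = negMass x :=
  sum_congr rfl fun b _ => by simp only [max_def]; split_ifs <;> nlinarith

lemma lrp_denominator_ge (γ : ℝ) {s : ℝ} {x : ι → ℝ} (hN : negMass x ≤ s * posMass x) :
    (1 + γ - s) * posMass x ≤ ∑ b, (x b + γ * max (x b) 0) := by
  rw [lrp_denominator_eq]
  linarith

lemma lrpColumn_masses_le {γ s : ℝ} (hγ : 0 ≤ γ) (hs : s < 1 + γ) {x : ι → ℝ}
    (hP : 0 < posMass x) (hN : negMass x ≤ s * posMass x) :
    posMass (lrpColumn γ x) ≤ (1 + γ) / (1 + γ - s) ∧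
      negMass (lrpColumn γ x) ≤ s / (1 + γ - s) := by
  have hE : 0 < 1 + γ - s := by linarith
  have hD := lrp_denominator_ge γ hN
  have hD0 : 0 < ∑ b, (x b + γ * max (x b) 0) := lt_of_lt_of_le (mul_pos hE hP) hD
  have hs0 : 0 ≤ s := nonneg_of_mul_nonneg_left (le_trans (negMass_nonneg x) hN) hP
  unfold lrpColumn
  rw [posMass_div_const _ hD0.le, negMass_div_const _ hD0.le, posMass_lrp_numerator hγ,
    negMass_lrp_numerator hγ, div_le_div_iff₀ hD0 hE, div_le_div_iff₀ hD0 hE]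
  constructor <;> nlinarith [mul_le_mul_of_nonneg_left hD hs0]

end LRP

lemma posMass_chainProd_mulVec_le (d : ℕ → ℕ)
    (M : ∀ l : ℕ, Matrix (Fin (d l)) (Fin (d (l + 1))) ℝ) {α β B : ℝ} (hβ : 0 ≤ β)
    (hβα : β ≤ α) (hαB : α ≤ B) (n : ℕ)
    (hcol : ∀ j ≤ n, ∀ u, posMass ((M j)ᵀ u) ≤ α ∧ negMass ((M j)ᵀ u) ≤ β)
    (v : Fin (d (n + 1)) → ℝ) :
    posMass (chainProd d M (n + 1) *ᵥ v) ≤ (2 * B) ^ n * (α * posMass v + β * negMass v) := by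
  induction n with
  | zero =>
    simpa [chainProd] using
      posMass_mulVec_le (M 0) (hcol 0 le_rfl · |>.1) (hcol 0 le_rfl · |>.2) v
  | succ n ih =>
    have hMv : chainProd d M (n + 2) *ᵥ v = chainProd d M (n + 1) *ᵥ (M (n + 1) *ᵥ v) := by
      rw [chainProd, mulVec_mulVec]
    have hP := posMass_mulVec_le (M (n + 1)) (hcol _ le_rfl · |>.1) (hcol _ le_rfl · |>.2) v
    have hN := negMass_mulVec_le (M (n + 1)) (hcol _ le_rfl · |>.1) (hcol _ le_rfl · |>.2) v
    have hα : 0 ≤ α := hβ.trans hβα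
    have one_layer : α * posMass (M (n + 1) *ᵥ v) + β * negMass (M (n + 1) *ᵥ v)
        ≤ 2 * B * (α * posMass v + β * negMass v) := by
      have := posMass_nonneg v
      have := negMass_nonneg v
      calc _ ≤ α * (α * posMass v + β * negMass v) + β * (β * posMass v + α * negMass v) :=
            add_le_add (mul_le_mul_of_nonneg_left hP hα) (mul_le_mul_of_nonneg_left hN hβ)
        _ ≤ 2 * B * (α * posMass v + β * negMass v) := by
            nlinarith [mul_le_mul hβα hβα hβ hα, mul_le_mul_of_nonneg_right hαB hα,
              mul_le_mul_of_nonneg_right hαB hβ]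
    rw [hMv, pow_succ, mul_assoc]
    exact (ih (fun j hj => hcol j (by omega)) _).trans
      (mul_le_mul_of_nonneg_left one_layer (pow_nonneg (by linarith) n))

lemma sqrt_div_le_one_div_sqrt_sub_one {γ : ℝ} (hγ : 1 < γ) :
    √γ / (1 + γ - √γ) ≤ 1 / (√γ - 1) := by
  have hs : 1 < √γ := Real.lt_sqrt_of_sq_lt (by rwa [one_pow])
  have hss : √γ * √γ = γ := Real.mul_self_sqrt (by linarith)
  rw [div_le_div_iff₀ (by nlinarith) (by linarith)]
  nlinarith

theorem lrp_gamma_sequential_bound_general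
    (γ : ℝ) (hγ : 1 < γ) (t : ℕ) (ht : 1 ≤ t)
    (d : ℕ → ℕ)
    (y : ∀ j : ℕ, Fin (d (j + 1)) → Fin (d j) → ℝ)
    (hy : ∀ j, j < t → ∀ u, (0 < ∑ b, max (y j u b) 0) ∧
      (Real.sqrt γ)⁻¹ * ∑ b, max (-(y j u b)) 0 < ∑ b, max (y j u b) 0)
    (M : ∀ j : ℕ, Matrix (Fin (d j)) (Fin (d (j + 1))) ℝ)
    (hMdef : ∀ j, ∀ (b : Fin (d j)) (u : Fin (d (j + 1))), M j b u =
      (y j u b + γ * max (y j u b) 0) / ∑ b', (y j u b' + γ * max (y j u b') 0))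
    (q : Fin (d t) → ℝ) (hq : ∀ u, 0 ≤ q u) (hqs : ∑ u, q u = 1)
    (w : Fin (d 0) → ℝ) (hw : w = (chainProd d M t) *ᵥ q)
    (bγ : ℝ)
    (hbγ : bγ = max (1 / (Real.sqrt γ - 1)) ((1 + γ) / (1 + γ - Real.sqrt γ))) :
    (∑ i ∈ univ.filter (fun i => 0 < w i), w i) ≤
        2 ^ (t - 1) * ((1 + γ) / (1 + γ - Real.sqrt γ)) * bγ ^ (t - 1) ∧
      (∑ i ∈ univ.filter (fun i => w i < 0), w i) ≥
        -(2 ^ (t - 1) * (1 / (Real.sqrt γ - 1)) * bγ ^ (t - 1)) := by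
  obtain ⟨n, rfl⟩ : ∃ n, t = n + 1 := ⟨t - 1, by omega⟩
  have hs1 : 1 < √γ := Real.lt_sqrt_of_sq_lt (by rwa [one_pow])
  have hsγ : √γ < 1 + γ := by nlinarith [Real.mul_self_sqrt (by linarith : (0 : ℝ) ≤ γ)]
  have hcol (j : ℕ) (hj : j ≤ n) (u : Fin (d (j + 1))) :
      posMass ((M j)ᵀ u) ≤ (1 + γ) / (1 + γ - √γ) ∧
        negMass ((M j)ᵀ u) ≤ √γ / (1 + γ - √γ) := by
    obtain ⟨hP, hN⟩ := hy j (by omega) u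
    rw [show (M j)ᵀ u = lrpColumn γ (y j u) from funext fun b => hMdef j b u]
    exact lrpColumn_masses_le (by linarith) hsγ hP ((inv_mul_lt_iff₀ (by linarith)).mp hN).le
  have hbound := posMass_chainProd_mulVec_le d M (div_nonneg (Real.sqrt_nonneg γ) (by linarith))
    (div_le_div_of_nonneg_right (by linarith) (by linarith)) (hbγ ▸ le_max_right _ _) n hcol
  have hq1 : posMass q = 1 := (posMass_of_nonneg hq).trans hqs
  have hq0 : negMass q = 0 := negMass_of_nonneg hq
  have h2b : 0 ≤ (2 * bγ) ^ n :=
    pow_nonneg (mul_nonneg zero_le_two (hbγ ▸ le_max_of_le_left (by simpa using hs1.le))) n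
  rw [sum_filter_pos_eq_posMass, sum_filter_neg_eq_neg_negMass, ← posMass_neg, hw, ← mulVec_neg,
    Nat.add_sub_cancel, ge_iff_le, neg_le_neg_iff]
  constructor
  · calc _ ≤ (2 * bγ) ^ n * ((1 + γ) / (1 + γ - √γ)) := by simpa [hq1, hq0] using hbound q
      _ = _ := by ring
  · calc _ ≤ (2 * bγ) ^ n * (√γ / (1 + γ - √γ)) := by
          simpa [posMass_neg, negMass_neg, hq1, hq0] using hbound (-q)
      _ ≤ (2 * bγ) ^ n * (1 / (√γ - 1)) :=
          mul_le_mul_of_nonneg_left (sqrt_div_le_one_div_sqrt_sub_one hγ) h2b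
      _ = _ := by ring

/-- Sequential bound for LRP-γ: propagating simplex weights `q` through `t` LRP-γ layers,
all of whose columns satisfy the γ-condition, the attribution map `w = M_1 ⋯ M_t q`
satisfies, with `b(γ) = max(1/(√γ−1), (1+γ)/(1+γ−√γ))`:
`∑_{w_i>0} w_i ≤ 2^{t-1}·((1+γ)/(1+γ−√γ))·b(γ)^{t-1}` and
`∑_{w_i<0} w_i ≥ −2^{t-1}·(1/(√γ−1))·b(γ)^{t-1}`. -/
theorem lrp_gamma_sequential_bound
    (γ : ℝ) (hγ : 1 < γ) (t : ℕ) (ht : 1 ≤ t)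
    (d : ℕ → ℕ) (hd : ∀ j, j ≤ t → 0 < d j)
    (y : ∀ j : ℕ, Fin (d (j + 1)) → Fin (d j) → ℝ)
    (hy : ∀ j, j < t → ∀ u, (0 < ∑ b, max (y j u b) 0) ∧
      (Real.sqrt γ)⁻¹ * ∑ b, max (-(y j u b)) 0 < ∑ b, max (y j u b) 0)
    (M : ∀ j : ℕ, Matrix (Fin (d j)) (Fin (d (j + 1))) ℝ)
    (hMdef : ∀ j, ∀ (b : Fin (d j)) (u : Fin (d (j + 1))), M j b u =
      (y j u b + γ * max (y j u b) 0) / ∑ b', (y j u b' + γ * max (y j u b') 0))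
    (q : Fin (d t) → ℝ) (hq : ∀ u, 0 ≤ q u) (hqs : ∑ u, q u = 1)
    (w : Fin (d 0) → ℝ) (hw : w = (chainProd d M t) *ᵥ q)
    (bγ : ℝ)
    (hbγ : bγ = max (1 / (Real.sqrt γ - 1)) ((1 + γ) / (1 + γ - Real.sqrt γ))) :
    (∑ i ∈ univ.filter (fun i => 0 < w i), w i) ≤
        2 ^ (t - 1) * ((1 + γ) / (1 + γ - Real.sqrt γ)) * bγ ^ (t - 1) ∧
      (∑ i ∈ univ.filter (fun i => w i < 0), w i) ≥
        -(2 ^ (t - 1) * (1 / (Real.sqrt γ - 1)) * bγ ^ (t - 1)) :=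
  lrp_gamma_sequential_bound_general γ hγ t ht d y hy M hMdef q hq hqs w hw bγ hbγ
end
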